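/- For every integer m ≥ 1 there exists a constant C = C(n,m) > 0 such that for every smooth odd periodic function v : ℝⁿ → ℂ and every d = (d₁,…,d_n) ∈ (ℕ₊)ⁿ one has ‖v·φ_d‖_{H¹} ≤ C·( |v|_∞·|d| + |v|_∞^{1−1/m}·S_m(v)^{1/m} ), where φ_d(x) = (2/π)^{n/2}·∏_{j=1}^n sin(d_j x_j) and |d| = (d₁² + ⋯ + d_n²)^{1/2}. -/

import Mathlib

open MeasureTheory

noncomputable section

/-- The cube `K = [0, π]ⁿ ⊂ ℝⁿ`. -/
def cubeK (n : ℕ) : Set (Fin n → ℝ) := Set.Icc 0 (fun _ => Real.pi)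

/-- The partial derivative `∂_j f`. -/
def pd {F : Type*} [NormedAddCommGroup F] [NormedSpace ℝ F]
    {n : ℕ} (j : Fin n) (f : (Fin n → ℝ) → F) : (Fin n → ℝ) → F :=
  fun x => fderiv ℝ f x (Pi.single j 1)

/-- The multi-index derivative `∂^β f = ∂_1^{β 1} ⋯ ∂_n^{β n} f`. -/
def mderiv {F : Type*} [NormedAddCommGroup F] [NormedSpace ℝ F]
    {n : ℕ} (β : Fin n → ℕ) (f : (Fin n → ℝ) → F) : (Fin n → ℝ) → F :=
  (List.finRange n).foldr (fun j g => (pd j)^[β j] g) f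

/-- The squared `L²(K, π^{-n}dx)`-norm `‖f‖₀²`. -/
def l2sq {F : Type*} [NormedAddCommGroup F] (n : ℕ) (f : (Fin n → ℝ) → F) : ℝ :=
  (Real.pi ^ n)⁻¹ * ∫ x in cubeK n, ‖f x‖ ^ 2

/-- The homogeneous Sobolev seminorm `S_k(f) = (Σ_{|β| = k} ‖∂^β f‖₀²)^{1/2}`. -/
def Snorm {F : Type*} [NormedAddCommGroup F] [NormedSpace ℝ F]
    (n k : ℕ) (f : (Fin n → ℝ) → F) : ℝ :=
  Real.sqrt (∑ β ∈ Finset.Nat.antidiagonalTuple n k, l2sq n (mderiv β f))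

/-- The sup-norm `|f|_∞ = sup_{x ∈ K} |f(x)|`. -/
def supNormK {F : Type*} [NormedAddCommGroup F] (n : ℕ) (f : (Fin n → ℝ) → F) : ℝ :=
  ⨆ x : cubeK n, ‖f (x : Fin n → ℝ)‖

/-- `f` is odd periodic: `2π`-periodic in each coordinate and odd in each coordinate. -/
def OddPeriodic {F : Type*} [AddCommGroup F] {n : ℕ} (f : (Fin n → ℝ) → F) : Prop :=
  (∀ (x : Fin n → ℝ) (j : Fin n), f (x + Pi.single j (2 * Real.pi)) = f x) ∧
  (∀ (x : Fin n → ℝ) (j : Fin n), f (Function.update x j (-(x j))) = -f x)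


/-- The non-homogeneous Sobolev norm `‖f‖_{H¹} = (‖f‖₀² + S₁(f)²)^{1/2}`. -/
def H1norm {F : Type*} [NormedAddCommGroup F] [NormedSpace ℝ F]
    (n : ℕ) (f : (Fin n → ℝ) → F) : ℝ :=
  Real.sqrt (l2sq n f + ∑ β ∈ Finset.Nat.antidiagonalTuple n 1, l2sq n (mderiv β f))

/-- The sine basis function `φ_d(x) = (2/π)^{n/2} ∏_j sin(d_j x_j)`. -/
def phiBasis {n : ℕ} (d : Fin n → ℕ) (x : Fin n → ℝ) : ℝ :=
  (2 / Real.pi) ^ ((n : ℝ) / 2) * ∏ j : Fin n, Real.sin ((d j : ℝ) * x j)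

namespace Stmt10Aux

open Real

variable {n : ℕ}

/-! ### Basic facts about the cube -/

lemma cubeK_nonempty (n : ℕ) : (cubeK n).Nonempty :=
  ⟨0, by constructor <;> intro i <;> simp [Real.pi_nonneg]⟩

lemma isCompact_cubeK (n : ℕ) : IsCompact (cubeK n) := isCompact_Icc

lemma measurableSet_cubeK (n : ℕ) : MeasurableSet (cubeK n) := measurableSet_Icc

lemma volume_cubeK (n : ℕ) : volume (cubeK n) = ENNReal.ofReal (Real.pi ^ n) := by
  rw [cubeK, Real.volume_Icc_pi]
  simp [ENNReal.ofReal_pow Real.pi_nonneg]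

lemma integrableOn_cubeK {F : Type*} [NormedAddCommGroup F] {f : (Fin n → ℝ) → F}
    (hf : Continuous f) : IntegrableOn f (cubeK n) :=
  hf.continuousOn.integrableOn_compact (isCompact_cubeK n)

instance : IsFiniteMeasure (volume.restrict (cubeK n)) := by
  constructor
  rw [Measure.restrict_apply_univ, volume_cubeK]
  exact ENNReal.ofReal_lt_top

/-! ### l2sq and supNormK basics -/

lemma l2sq_nonneg {F : Type*} [NormedAddCommGroup F] (f : (Fin n → ℝ) → F) :
    0 ≤ l2sq n f := by
  apply mul_nonneg (by positivity)
  exact setIntegral_nonneg (measurableSet_cubeK n) fun x _ => by positivity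

lemma l2sq_le_sup_sq {F : Type*} [NormedAddCommGroup F] {f : (Fin n → ℝ) → F} {M : ℝ}
    (hf : Continuous f) (hM : 0 ≤ M) (h : ∀ x ∈ cubeK n, ‖f x‖ ≤ M) :
    l2sq n f ≤ M ^ 2 := by
  have hpin : 0 < Real.pi ^ n := pow_pos Real.pi_pos n
  have h1 : ∫ x in cubeK n, ‖f x‖ ^ 2 ≤ ∫ _x in cubeK n, M ^ 2 := by
    apply setIntegral_mono_on
    · exact (hf.norm.pow 2).continuousOn.integrableOn_compact (isCompact_cubeK n)
    · exact integrableOn_const (by rw [volume_cubeK]; exact ENNReal.ofReal_lt_top.ne)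
    · exact measurableSet_cubeK n
    · intro x hx
      have := h x hx
      nlinarith [norm_nonneg (f x)]
  rw [l2sq]
  calc (Real.pi ^ n)⁻¹ * ∫ x in cubeK n, ‖f x‖ ^ 2
      ≤ (Real.pi ^ n)⁻¹ * ∫ _x in cubeK n, M ^ 2 := by
        exact mul_le_mul_of_nonneg_left h1 (by positivity)
    _ = M ^ 2 := by
        rw [setIntegral_const, measureReal_def, volume_cubeK, ENNReal.toReal_ofReal hpin.le, smul_eq_mul]
        field_simp

lemma integrableOn_normsq_cubeK {F : Type*} [NormedAddCommGroup F] {f : (Fin n → ℝ) → F}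
    (hf : Continuous f) : IntegrableOn (fun x => ‖f x‖ ^ 2) (cubeK n) :=
  (hf.norm.pow 2).continuousOn.integrableOn_compact (isCompact_cubeK n)

lemma bddAbove_norm_cubeK {F : Type*} [NormedAddCommGroup F] {f : (Fin n → ℝ) → F}
    (hf : Continuous f) : BddAbove (Set.range fun x : cubeK n => ‖f (x : Fin n → ℝ)‖) := by
  have : (fun y : Fin n → ℝ => ‖f y‖) '' (cubeK n) = Set.range fun x : cubeK n => ‖f x‖ :=
    Set.image_eq_range _ _
  rw [← this]
  exact ((isCompact_cubeK n).image_of_continuousOn (hf.norm.continuousOn)).bddAbove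

lemma norm_le_supNormK {F : Type*} [NormedAddCommGroup F] {f : (Fin n → ℝ) → F}
    (hf : Continuous f) {x : Fin n → ℝ} (hx : x ∈ cubeK n) : ‖f x‖ ≤ supNormK n f :=
  le_ciSup (bddAbove_norm_cubeK hf) (⟨x, hx⟩ : cubeK n)

lemma supNormK_nonneg {F : Type*} [NormedAddCommGroup F] {f : (Fin n → ℝ) → F}
    (hf : Continuous f) : 0 ≤ supNormK n f :=
  le_trans (norm_nonneg _) (norm_le_supNormK hf (cubeK_nonempty n).choose_spec)

/-! ### smoothness of pd -/

lemma contDiff_pd {f : (Fin n → ℝ) → ℂ} (hf : ContDiff ℝ (⊤ : ℕ∞) f) (j : Fin n) :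
    ContDiff ℝ (⊤ : ℕ∞) (pd j f) := by
  have h1 : ContDiff ℝ (⊤ : ℕ∞) (fderiv ℝ f) := hf.fderiv_right (by simp)
  exact (ContinuousLinearMap.apply ℝ ℂ (Pi.single j 1 : Fin n → ℝ)).contDiff.comp h1

lemma contDiff_pd_iter {f : (Fin n → ℝ) → ℂ} (hf : ContDiff ℝ (⊤ : ℕ∞) f) (j : Fin n) (k : ℕ) :
    ContDiff ℝ (⊤ : ℕ∞) ((pd j)^[k] f) := by
  induction k with
  | zero => exact hf
  | succ k ih => rw [Function.iterate_succ_apply']; exact contDiff_pd ih j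

/-! ### pd computation rules -/

lemma pd_eq_of_hasFDerivAt {f : (Fin n → ℝ) → ℂ} {L : (Fin n → ℝ) →L[ℝ] ℂ}
    {x : Fin n → ℝ} (h : HasFDerivAt f L x) (j : Fin n) :
    pd j f x = L (Pi.single j 1) := by
  simp only [pd, h.fderiv]

lemma pd_mul {f g : (Fin n → ℝ) → ℂ} {x : Fin n → ℝ} (j : Fin n)
    (hf : DifferentiableAt ℝ f x) (hg : DifferentiableAt ℝ g x) :
    pd j (fun y => f y * g y) x = pd j f x * g x + f x * pd j g x := by
  simp only [pd]
  rw [fderiv_fun_mul hf hg]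
  simp only [ContinuousLinearMap.add_apply, ContinuousLinearMap.smul_apply, smul_eq_mul]
  ring

lemma pd_conj {g : (Fin n → ℝ) → ℂ} {x : Fin n → ℝ} (j : Fin n)
    (hg : DifferentiableAt ℝ g x) :
    pd j (fun y => (starRingEnd ℂ) (g y)) x = (starRingEnd ℂ) (pd j g x) := by
  have h : HasFDerivAt (fun y => (starRingEnd ℂ) (g y))
      (((Complex.conjCLE : ℂ ≃L[ℝ] ℂ) : ℂ →L[ℝ] ℂ).comp (fderiv ℝ g x)) x :=
    ((Complex.conjCLE : ℂ ≃L[ℝ] ℂ) : ℂ →L[ℝ] ℂ).hasFDerivAt.comp x hg.hasFDerivAt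
  rw [pd_eq_of_hasFDerivAt h j]
  rfl

lemma pd_ofReal {g : (Fin n → ℝ) → ℝ} {x : Fin n → ℝ} (j : Fin n)
    (hg : DifferentiableAt ℝ g x) :
    pd j (fun y => ((g y : ℝ) : ℂ)) x = ((pd j g x : ℝ) : ℂ) := by
  have h : HasFDerivAt (fun y => ((g y : ℝ) : ℂ))
      (Complex.ofRealCLM.comp (fderiv ℝ g x)) x :=
    Complex.ofRealCLM.hasFDerivAt.comp x hg.hasFDerivAt
  rw [pd_eq_of_hasFDerivAt h j]
  rfl

/-- 1D slice derivative equals `pd`. -/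
lemma hasDerivAt_slice {F : Type*} [NormedAddCommGroup F] [NormedSpace ℝ F]
    {g : (Fin n → ℝ) → F} {x : Fin n → ℝ} (j : Fin n) (hg : DifferentiableAt ℝ g x) :
    HasDerivAt (fun t => g (Function.update x j t)) (pd j g x) (x j) := by
  have hpath : ∀ t : ℝ,
      Function.update x j t = Function.update x j 0 + t • (Pi.single j 1 : Fin n → ℝ) := by
    intro t; funext i
    by_cases h : i = j
    · subst h; simp
    · simp [Function.update, h, Pi.single_apply]
  have hline : HasDerivAt
      (fun t : ℝ => Function.update x j 0 + t • (Pi.single j 1 : Fin n → ℝ))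
      (Pi.single j 1) (x j) := by
    simpa using
      ((hasDerivAt_id (x j)).smul_const (Pi.single j 1 : Fin n → ℝ)).const_add
        (Function.update x j 0)
  have hx : Function.update x j 0 + (x j) • (Pi.single j 1 : Fin n → ℝ) = x := by
    rw [← hpath (x j)]; exact Function.update_eq_self j x
  have hgx : HasFDerivAt g (fderiv ℝ g x)
      (Function.update x j 0 + (x j) • (Pi.single j 1 : Fin n → ℝ)) := by
    rw [hx]; exact hg.hasFDerivAt
  have h2 := HasFDerivAt.comp_hasDerivAt (x j) hgx hline
  have hfun : (fun t : ℝ =>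
      g (Function.update x j 0 + t • (Pi.single j 1 : Fin n → ℝ)))
      = fun t => g (Function.update x j t) := by
    funext t; rw [← hpath t]
  rw [Function.comp_def, hfun] at h2
  exact h2

/-! ### Translation and reflection behaviour of pd -/

lemma pd_periodic {g : (Fin n → ℝ) → ℂ} (hg : ContDiff ℝ (⊤ : ℕ∞) g) (j : Fin n) (c : Fin n → ℝ)
    (hper : ∀ x, g (x + c) = g x) : ∀ x, pd j g (x + c) = pd j g x := by
  intro x
  have hd : HasFDerivAt (fun y => g (y + c)) (fderiv ℝ g (x + c)) x := by
    have h1 : HasFDerivAt (fun y : Fin n → ℝ => y + c) (ContinuousLinearMap.id ℝ _) x :=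
      (hasFDerivAt_id x).add_const c
    have := ((hg.differentiable (by simp) (x + c)).hasFDerivAt).comp x h1
    simpa [Function.comp_def] using this
  have hg' : HasFDerivAt g (fderiv ℝ g (x + c)) x := by
    have : (fun y => g (y + c)) = g := funext hper
    rwa [this] at hd
  simp only [pd, hg'.fderiv]

/-- The reflection in coordinate `j` as a continuous linear map. -/
def reflCLM (j : Fin n) : (Fin n → ℝ) →L[ℝ] (Fin n → ℝ) :=
  ContinuousLinearMap.id ℝ _ -
    (2 : ℝ) • ((ContinuousLinearMap.proj j).smulRight (Pi.single j 1))

lemma reflCLM_apply (j : Fin n) (x : Fin n → ℝ) :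
    reflCLM j x = Function.update x j (-(x j)) := by
  funext i
  by_cases h : i = j
  · subst h
    simp [reflCLM, Pi.single_apply]
    ring
  · simp [reflCLM, Function.update, h, Pi.single_apply]

lemma pd_reflect {g : (Fin n → ℝ) → ℂ} (hg : ContDiff ℝ (⊤ : ℕ∞) g) (j : Fin n) (c : ℂ)
    (hsym : ∀ x, g (Function.update x j (-(x j))) = c * g x) :
    ∀ x, pd j g (Function.update x j (-(x j))) = -c * pd j g x := by
  intro x
  have hRx : HasFDerivAt (fun y => g (reflCLM j y))
      ((fderiv ℝ g (reflCLM j x)).comp (reflCLM j)) x :=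
    ((hg.differentiable (by simp) _).hasFDerivAt).comp x (reflCLM j).hasFDerivAt
  have heq : (fun y => g (reflCLM j y)) = fun y => c * g y := by
    funext y; rw [reflCLM_apply, hsym]
  rw [heq] at hRx
  have hc : HasFDerivAt (fun y => c * g y) (c • fderiv ℝ g x) x :=
    ((hg.differentiable (by simp) x).hasFDerivAt).const_mul c
  have huniq := hRx.unique hc
  have happ := congrArg (fun L => L (Pi.single j 1)) huniq
  simp only [ContinuousLinearMap.comp_apply, ContinuousLinearMap.smul_apply,
    smul_eq_mul] at happ
  have hrefl_single : reflCLM j (Pi.single j 1 : Fin n → ℝ) = -(Pi.single j 1) := by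
    rw [reflCLM_apply]
    funext i
    by_cases h : i = j
    · subst h; simp
    · simp [Function.update, h, Pi.single_apply]
  rw [hrefl_single, map_neg] at happ
  have : -(pd j g (reflCLM j x)) = c * pd j g x := happ
  rw [reflCLM_apply] at this
  simp only [pd] at this ⊢
  linear_combination -this

/-- A function that is `2π`-periodic in coordinate `j` and odd in coordinate `j`
vanishes when `x j = 0` or `x j = π`. -/
lemma vanish_of_odd_periodic {g : (Fin n → ℝ) → ℂ} (j : Fin n)
    (hper : ∀ x, g (x + Pi.single j (2 * Real.pi)) = g x)
    (hodd : ∀ x, g (Function.update x j (-(x j))) = -g x) :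
    ∀ x, (x j = 0 ∨ x j = Real.pi) → g x = 0 := by
  intro x hx
  rcases hx with h0 | hpi
  · have := hodd x
    rw [h0] at this
    rw [neg_zero, ← h0, Function.update_eq_self] at this
    linear_combination (this : g x = -g x) / 2 -- g x = -g x
  · have h1 := hodd x
    have h2 := hper (Function.update x j (-(x j)))
    have h3 : Function.update x j (-(x j)) + Pi.single j (2 * Real.pi) = x := by
      funext i
      by_cases h : i = j
      · subst h; simp [hpi]; ring
      · simp [Function.update, h, Pi.single_apply]
    rw [h3] at h2
    -- h2 : g x = g (update x j (-(x j))),  h1 : g (update ...) = - g x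
    rw [h1] at h2
    linear_combination h2 / 2

/-! ### Integration by parts via the divergence theorem -/

lemma ibp_zero {k : ℕ} (j : Fin (k + 1)) (H : (Fin (k + 1) → ℝ) → ℂ)
    (hH : ContDiff ℝ (⊤ : ℕ∞) H)
    (hb : ∀ x, (x j = 0 ∨ x j = Real.pi) → H x = 0) :
    ∫ x in cubeK (k + 1), pd j H x = 0 := by
  classical
  set a : Fin (k + 1) → ℝ := 0 with ha
  set b : Fin (k + 1) → ℝ := fun _ => Real.pi with hbdef
  have hle : a ≤ b := fun i => Real.pi_nonneg
  set f : Fin (k + 1) → (Fin (k + 1) → ℝ) → ℂ := fun i => if i = j then H else 0 with hfdef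
  set f' : Fin (k + 1) → (Fin (k + 1) → ℝ) → (Fin (k + 1) → ℝ) →L[ℝ] ℂ :=
    fun i x => if i = j then fderiv ℝ H x else 0 with hf'def
  have Hc : ∀ i, ContinuousOn (f i) (Set.Icc a b) := by
    intro i
    by_cases h : i = j
    · simp only [hfdef, h, if_pos rfl]
      exact hH.continuous.continuousOn
    · simp only [hfdef, if_neg h]
      exact continuousOn_const
  have Hd : ∀ x ∈ (Set.pi Set.univ fun i => Set.Ioo (a i) (b i)) \ (∅ : Set _), ∀ i,
      HasFDerivAt (f i) (f' i x) x := by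
    intro x _ i
    by_cases h : i = j
    · simp only [hfdef, hf'def, h, if_pos rfl]
      exact (hH.differentiable (by simp) x).hasFDerivAt
    · simp only [hfdef, hf'def, if_neg h]
      exact hasFDerivAt_const 0 x
  have hdiv : ∀ x, (∑ i, f' i x (Pi.single i 1)) = pd j H x := by
    intro x
    have : ∀ i : Fin (k + 1),
        f' i x (Pi.single i 1) = if i = j then fderiv ℝ H x (Pi.single i 1) else 0 := by
      intro i
      by_cases h : i = j <;> simp [hf'def, h]
    simp only [this]
    rw [Finset.sum_ite_eq' Finset.univ j fun i => fderiv ℝ H x (Pi.single i 1)]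
    simp [pd]
  have Hcont : Continuous (pd j H) := (contDiff_pd hH j).continuous
  have Hi : IntegrableOn (fun x => ∑ i, f' i x (Pi.single i 1)) (Set.Icc a b) := by
    have : (fun x => ∑ i, f' i x (Pi.single i 1)) = pd j H := funext hdiv
    rw [this]
    exact Hcont.continuousOn.integrableOn_compact isCompact_Icc
  have hmain := MeasureTheory.integral_divergence_of_hasFDerivAt_off_countable' a b hle
    f f' ∅ Set.countable_empty Hc Hd Hi
  have hRHS : ∑ i : Fin (k + 1),
      ((∫ x in Set.Icc (a ∘ i.succAbove) (b ∘ i.succAbove), f i (i.insertNth (b i) x)) -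
        ∫ x in Set.Icc (a ∘ i.succAbove) (b ∘ i.succAbove), f i (i.insertNth (a i) x)) = 0 := by
    apply Finset.sum_eq_zero
    intro i _
    by_cases h : i = j
    · subst h
      have hfront : ∀ x : Fin k → ℝ, f i (i.insertNth (b i) x) = 0 := by
        intro x
        simp only [hfdef, if_pos rfl]
        exact hb _ (Or.inr (by simp [hbdef, Fin.insertNth_apply_same]))
      have hback : ∀ x : Fin k → ℝ, f i (i.insertNth (a i) x) = 0 := by
        intro x
        simp only [hfdef, if_pos rfl]
        exact hb _ (Or.inl (by simp [ha, Fin.insertNth_apply_same]))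
      simp only [hfront, hback, integral_zero, sub_zero]
    · simp only [hfdef, if_neg h, Pi.zero_apply, integral_zero, sub_zero]
  rw [hRHS] at hmain
  have : ∫ x in Set.Icc a b, pd j H x = 0 := by
    rw [← hmain]
    exact setIntegral_congr_fun measurableSet_Icc fun x _ => (hdiv x).symm
  exact this

/-! ### Cauchy-Schwarz -/

lemma memL2_of_continuous {f : (Fin n → ℝ) → ℂ} (hf : Continuous f) :
    MemLp f (ENNReal.ofReal 2) (volume.restrict (cubeK n)) := by
  obtain ⟨C, hC⟩ := (isCompact_cubeK n).exists_bound_of_continuousOn hf.continuousOn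
  refine MemLp.of_bound (hf.aestronglyMeasurable.restrict) C ?_
  exact (ae_restrict_iff' (measurableSet_cubeK n)).2 (ae_of_all _ hC)

lemma cauchy_schwarz_K {f g : (Fin n → ℝ) → ℂ} (hf : Continuous f) (hg : Continuous g) :
    ‖∫ x in cubeK n, f x * (starRingEnd ℂ) (g x)‖ ≤
      Real.sqrt (∫ x in cubeK n, ‖f x‖ ^ 2) * Real.sqrt (∫ x in cubeK n, ‖g x‖ ^ 2) := by
  have h1 : ‖∫ x in cubeK n, f x * (starRingEnd ℂ) (g x)‖ ≤
      ∫ x in cubeK n, ‖f x‖ * ‖g x‖ := by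
    refine (norm_integral_le_integral_norm _).trans_eq ?_
    apply integral_congr_ae
    refine Filter.Eventually.of_forall fun x => ?_
    simp [norm_mul]
  have hpq : Real.HolderConjugate 2 2 := by
    constructor <;> norm_num
  have h2 := MeasureTheory.integral_mul_norm_le_Lp_mul_Lq (μ := volume.restrict (cubeK n))
    hpq (memL2_of_continuous hf) (memL2_of_continuous hg)
  have e : ∀ h : (Fin n → ℝ) → ℂ, (∫ a in cubeK n, ‖h a‖ ^ (2 : ℝ)) =
      ∫ a in cubeK n, ‖h a‖ ^ (2 : ℕ) := by
    intro h
    apply integral_congr_ae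
    refine Filter.Eventually.of_forall fun x => ?_
    show ‖h x‖ ^ (2 : ℝ) = ‖h x‖ ^ (2 : ℕ)
    rw [← Real.rpow_natCast ‖h x‖ 2]
    norm_num
  rw [e, e] at h2
  rw [Real.sqrt_eq_rpow, Real.sqrt_eq_rpow]
  exact h1.trans h2

/-! ### mderiv unfolding -/

lemma foldr_single {F : Type*} [NormedAddCommGroup F] [NormedSpace ℝ F]
    (f : (Fin n → ℝ) → F) (j : Fin n) (c : ℕ) (l : List (Fin n)) :
    l.foldr (fun i g => (pd i)^[(Pi.single j c : Fin n → ℕ) i] g) f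
      = (pd j)^[c * l.count j] f := by
  induction l with
  | nil => simp
  | cons i l ih =>
    rw [List.foldr_cons, ih]
    by_cases h : i = j
    · subst h
      rw [List.count_cons_self]
      rw [← Function.iterate_add_apply]
      congr 1
      simp [Pi.single_apply]
      ring
    · rw [List.count_cons]
      simp [Pi.single_apply, h]

lemma mderiv_single {F : Type*} [NormedAddCommGroup F] [NormedSpace ℝ F]
    (f : (Fin n → ℝ) → F) (j : Fin n) (c : ℕ) :
    mderiv (Pi.single j c) f = (pd j)^[c] f := by
  rw [mderiv, foldr_single]
  congr 1
  rw [List.count_eq_one_of_mem (List.nodup_finRange n) (List.mem_finRange j), mul_one]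

lemma single_mem_antidiagonalTuple (j : Fin n) (c : ℕ) :
    (Pi.single j c : Fin n → ℕ) ∈ Finset.Nat.antidiagonalTuple n c := by
  rw [Finset.Nat.mem_antidiagonalTuple]
  simp

lemma eq_single_of_antidiagonalTuple_one {β : Fin n → ℕ}
    (hβ : β ∈ Finset.Nat.antidiagonalTuple n 1) : ∃ j, β = Pi.single j 1 := by
  rw [Finset.Nat.mem_antidiagonalTuple] at hβ
  have hne : ∑ i, β i ≠ 0 := by rw [hβ]; exact one_ne_zero
  obtain ⟨j, -, hj⟩ := Finset.exists_ne_zero_of_sum_ne_zero hne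
  have hj1 : β j = 1 := by
    have hle : β j ≤ 1 := hβ ▸ Finset.single_le_sum (fun i _ => Nat.zero_le _) (Finset.mem_univ j)
    omega
  have hrest : ∀ i, i ≠ j → β i = 0 := by
    intro i hi
    have hsplit := Finset.add_sum_erase Finset.univ β (Finset.mem_univ j)
    rw [hβ, hj1] at hsplit
    have hz : ∑ i ∈ Finset.univ.erase j, β i = 0 := by omega
    have := (Finset.sum_eq_zero_iff).mp hz i (Finset.mem_erase.mpr ⟨hi, Finset.mem_univ i⟩)
    exact this
  refine ⟨j, funext fun i => ?_⟩
  by_cases h : i = j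
  · subst h; simp [hj1]
  · simp [Pi.single_apply, h, hrest i h]

/-! ### phiBasis facts -/

/-- Complex-valued sine basis. -/
def phiC {n : ℕ} (d : Fin n → ℕ) : (Fin n → ℝ) → ℂ := fun x => ((phiBasis d x : ℝ) : ℂ)

lemma c_nonneg (n : ℕ) : 0 ≤ (2 / Real.pi) ^ ((n : ℝ) / 2) :=
  Real.rpow_nonneg (by positivity) _

lemma c_le_one (n : ℕ) : (2 / Real.pi) ^ ((n : ℝ) / 2) ≤ 1 :=
  Real.rpow_le_one (by positivity)
    (by
      rw [div_le_one Real.pi_pos]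
      nlinarith [Real.pi_gt_three])
    (by positivity)

lemma contDiff_phi (d : Fin n → ℕ) : ContDiff ℝ (⊤ : ℕ∞) (phiBasis d) := by
  unfold phiBasis
  apply ContDiff.mul contDiff_const
  apply contDiff_prod
  intro i _
  exact Real.contDiff_sin.comp (contDiff_const.mul (contDiff_apply (𝕜 := ℝ) (E := ℝ) i))

lemma abs_phi_le_one (d : Fin n → ℕ) (x : Fin n → ℝ) : |phiBasis d x| ≤ 1 := by
  rw [phiBasis, abs_mul]
  have h1 : |∏ i, Real.sin ((d i : ℝ) * x i)| ≤ 1 := by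
    rw [Finset.abs_prod]
    exact Finset.prod_le_one (fun i _ => abs_nonneg _) fun i _ => Real.abs_sin_le_one _
  have h0 := c_nonneg n
  have hc := c_le_one n
  rw [abs_of_nonneg h0]
  calc (2 / Real.pi) ^ ((n : ℝ) / 2) * |∏ i, Real.sin ((d i : ℝ) * x i)| ≤ 1 * 1 :=
        mul_le_mul hc h1 (abs_nonneg _) zero_le_one
    _ = 1 := mul_one 1

lemma pd_phi_eq (d : Fin n → ℕ) (j : Fin n) (x : Fin n → ℝ) :
    pd j (phiBasis d) x =
      ((2 / Real.pi) ^ ((n : ℝ) / 2) * ∏ i ∈ Finset.univ.erase j, Real.sin ((d i : ℝ) * x i)) *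
        (Real.cos ((d j : ℝ) * x j) * ((d j : ℝ) * 1)) := by
  have hdiff : DifferentiableAt ℝ (phiBasis d) x :=
    (contDiff_phi d).differentiable (by simp) x
  have hslice := hasDerivAt_slice j hdiff
  set A := (2 / Real.pi) ^ ((n : ℝ) / 2) *
    ∏ i ∈ Finset.univ.erase j, Real.sin ((d i : ℝ) * x i) with hA
  have hfun : (fun t => phiBasis d (Function.update x j t))
      = fun t => A * Real.sin ((d j : ℝ) * t) := by
    funext t
    rw [phiBasis, ← Finset.mul_prod_erase Finset.univ _ (Finset.mem_univ j)]
    have herase : ∀ i ∈ Finset.univ.erase j,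
        Real.sin ((d i : ℝ) * Function.update x j t i) = Real.sin ((d i : ℝ) * x i) := by
      intro i hi
      rw [Function.update_of_ne (Finset.mem_erase.mp hi).1]
    rw [Finset.prod_congr rfl herase, Function.update_self, hA]
    ring
  rw [hfun] at hslice
  have h1 : HasDerivAt (fun t : ℝ => (d j : ℝ) * t) ((d j : ℝ) * 1) (x j) :=
    (hasDerivAt_id (x j)).const_mul (d j : ℝ)
  have h2 := (Real.hasDerivAt_sin ((d j : ℝ) * x j)).comp (x j) h1
  have h3 : HasDerivAt (fun t => A * Real.sin ((d j : ℝ) * t))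
      (A * (Real.cos ((d j : ℝ) * x j) * ((d j : ℝ) * 1))) (x j) := by
    have := h2.const_mul A
    simpa [Function.comp_def] using this
  exact hslice.unique h3

lemma abs_pd_phi_le (d : Fin n → ℕ) (j : Fin n) (x : Fin n → ℝ) :
    |pd j (phiBasis d) x| ≤ (d j : ℝ) := by
  rw [pd_phi_eq]
  have hAbound : |(2 / Real.pi) ^ ((n : ℝ) / 2) *
      ∏ i ∈ Finset.univ.erase j, Real.sin ((d i : ℝ) * x i)| ≤ 1 := by
    rw [abs_mul, abs_of_nonneg (c_nonneg n)]
    have h1 : |∏ i ∈ Finset.univ.erase j, Real.sin ((d i : ℝ) * x i)| ≤ 1 := by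
      rw [Finset.abs_prod]
      exact Finset.prod_le_one (fun i _ => abs_nonneg _) fun i _ => Real.abs_sin_le_one _
    calc (2 / Real.pi) ^ ((n : ℝ) / 2) * |∏ i ∈ Finset.univ.erase j, Real.sin ((d i : ℝ) * x i)|
        ≤ 1 * 1 := mul_le_mul (c_le_one n) h1 (abs_nonneg _) zero_le_one
      _ = 1 := mul_one 1
  have hcos := Real.abs_cos_le_one ((d j : ℝ) * x j)
  have hd : (0:ℝ) ≤ (d j : ℝ) := Nat.cast_nonneg _
  have h2 : |Real.cos ((d j : ℝ) * x j) * ((d j : ℝ) * 1)| ≤ (d j : ℝ) := by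
    rw [mul_one, abs_mul, abs_of_nonneg hd]
    nlinarith [abs_nonneg (Real.cos ((d j : ℝ) * x j))]
  rw [abs_mul]
  calc |(2 / Real.pi) ^ ((n : ℝ) / 2) * ∏ i ∈ Finset.univ.erase j, Real.sin ((d i : ℝ) * x i)| *
        |Real.cos ((d j : ℝ) * x j) * ((d j : ℝ) * 1)| ≤ 1 * (d j : ℝ) :=
        mul_le_mul hAbound h2 (abs_nonneg _) zero_le_one
    _ = (d j : ℝ) := one_mul _

lemma contDiff_phiC (d : Fin n → ℕ) : ContDiff ℝ (⊤ : ℕ∞) (phiC d) :=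
  Complex.ofRealCLM.contDiff.comp (contDiff_phi d)

lemma norm_phiC_le_one (d : Fin n → ℕ) (x : Fin n → ℝ) : ‖phiC d x‖ ≤ 1 := by
  rw [phiC, Complex.norm_real]
  exact abs_phi_le_one d x

lemma norm_pd_phiC_le (d : Fin n → ℕ) (j : Fin n) (x : Fin n → ℝ) :
    ‖pd j (phiC d) x‖ ≤ (d j : ℝ) := by
  have hpd := pd_ofReal (g := phiBasis d) (x := x) j ((contDiff_phi d).differentiable (by simp) x)
  show ‖pd j (fun y => ((phiBasis d y : ℝ) : ℂ)) x‖ ≤ (d j : ℝ)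
  rw [hpd, Complex.norm_real]
  exact abs_pd_phi_le d j x

/-! ### arithmetic lemmas -/

lemma chain_pow {a : ℕ → ℝ} (h0 : ∀ k, 0 ≤ a k)
    (h : ∀ k, a (k + 1) ^ 2 ≤ a k * a (k + 2)) :
    ∀ m : ℕ, a 1 ^ (m + 1) ≤ a 0 ^ m * a (m + 1) := by
  have Q : ∀ k, a k * a 1 ≤ a 0 * a (k + 1) := by
    intro k
    induction k with
    | zero => exact le_rfl
    | succ k ih =>
      by_cases hz : a (k + 1) = 0
      · rw [hz, zero_mul]
        exact mul_nonneg (h0 0) (h0 (k + 2))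
      · have hpos : 0 < a (k + 1) := (h0 _).lt_of_ne (Ne.symm hz)
        have h1 : a (k + 1) ^ 2 * a 1 ≤ (a 0 * a (k + 1)) * a (k + 2) := by
          nlinarith [h k, h0 1, h0 (k + 2), h0 k]
        nlinarith [hpos]
  intro m
  induction m with
  | zero => simp
  | succ m ih =>
    calc a 1 ^ (m + 2) = a 1 ^ (m + 1) * a 1 := by ring
      _ ≤ (a 0 ^ m * a (m + 1)) * a 1 := mul_le_mul_of_nonneg_right ih (h0 1)
      _ = a 0 ^ m * (a (m + 1) * a 1) := by ring
      _ ≤ a 0 ^ m * (a 0 * a (m + 2)) := by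
          exact mul_le_mul_of_nonneg_left (Q (m + 1)) (pow_nonneg (h0 0) m)
      _ = a 0 ^ (m + 1) * a (m + 2) := by ring

lemma le_rpow_of_pow_le {x A B : ℝ} {m : ℕ} (hm : 1 ≤ m) (hx : 0 ≤ x) (hA : 0 ≤ A)
    (hB : 0 ≤ B) (h : x ^ m ≤ A ^ (m - 1) * B) :
    x ≤ A ^ (1 - 1 / (m : ℝ)) * B ^ (1 / (m : ℝ)) := by
  have hm0 : (0 : ℝ) < (m : ℝ) := by exact_mod_cast hm
  have h1 : x = (x ^ m) ^ (1 / (m : ℝ)) := by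
    rw [← Real.rpow_natCast x m, ← Real.rpow_mul hx, mul_one_div, div_self hm0.ne',
      Real.rpow_one]
  rw [h1]
  have h2 : ((x ^ m : ℝ)) ^ (1 / (m : ℝ)) ≤ (A ^ (m - 1) * B) ^ (1 / (m : ℝ)) :=
    Real.rpow_le_rpow (pow_nonneg hx m) h (by positivity)
  refine h2.trans (le_of_eq ?_)
  rw [Real.mul_rpow (pow_nonneg hA _) hB]
  congr 1
  rw [← Real.rpow_natCast A (m - 1), ← Real.rpow_mul hA]
  congr 1
  have hcast : ((m - 1 : ℕ) : ℝ) = (m : ℝ) - 1 := by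
    rw [Nat.cast_sub hm]; norm_num
  rw [hcast]
  field_simp

/-! ### more l2sq lemmas -/

lemma l2sq_add_le {F G : (Fin n → ℝ) → ℂ} (hF : Continuous F) (hG : Continuous G) :
    l2sq n (fun x => F x + G x) ≤ 2 * l2sq n F + 2 * l2sq n G := by
  have hiF := integrableOn_normsq_cubeK hF
  have hiG := integrableOn_normsq_cubeK hG
  have hint : ∫ x in cubeK n, ‖F x + G x‖ ^ 2 ≤
      ∫ x in cubeK n, (2 * ‖F x‖ ^ 2 + 2 * ‖G x‖ ^ 2) := by
    apply setIntegral_mono_on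
    · exact integrableOn_normsq_cubeK (hF.add hG)
    · exact (hiF.const_mul 2).add (hiG.const_mul 2)
    · exact measurableSet_cubeK n
    · intro x _
      nlinarith [norm_add_le (F x) (G x), norm_nonneg (F x), norm_nonneg (G x),
        norm_nonneg (F x + G x), sq_nonneg (‖F x‖ - ‖G x‖)]
  have hsplit : ∫ x in cubeK n, (2 * ‖F x‖ ^ 2 + 2 * ‖G x‖ ^ 2) =
      2 * (∫ x in cubeK n, ‖F x‖ ^ 2) + 2 * ∫ x in cubeK n, ‖G x‖ ^ 2 := by
    rw [integral_add (hiF.const_mul 2) (hiG.const_mul 2)]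
    simp_rw [← smul_eq_mul, integral_smul]
  simp only [l2sq]
  have hpinv : (0:ℝ) ≤ (Real.pi ^ n)⁻¹ := by positivity
  calc (Real.pi ^ n)⁻¹ * ∫ x in cubeK n, ‖F x + G x‖ ^ 2
      ≤ (Real.pi ^ n)⁻¹ * (2 * (∫ x in cubeK n, ‖F x‖ ^ 2) + 2 * ∫ x in cubeK n, ‖G x‖ ^ 2) := by
        apply mul_le_mul_of_nonneg_left _ hpinv
        rw [← hsplit]; exact hint
    _ = 2 * ((Real.pi ^ n)⁻¹ * ∫ x in cubeK n, ‖F x‖ ^ 2) +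
        2 * ((Real.pi ^ n)⁻¹ * ∫ x in cubeK n, ‖G x‖ ^ 2) := by ring

lemma l2sq_mono {F G : (Fin n → ℝ) → ℂ} (hF : Continuous F) (hG : Continuous G)
    (h : ∀ x ∈ cubeK n, ‖F x‖ ≤ ‖G x‖) : l2sq n F ≤ l2sq n G := by
  simp only [l2sq]
  apply mul_le_mul_of_nonneg_left _ (by positivity)
  apply setIntegral_mono_on (integrableOn_normsq_cubeK hF) (integrableOn_normsq_cubeK hG)
    (measurableSet_cubeK n)
  intro x hx
  have := h x hx
  nlinarith [norm_nonneg (F x)]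

/-! ### iterated derivative chain -/

lemma contDiff_conj {g : (Fin n → ℝ) → ℂ} (hg : ContDiff ℝ (⊤ : ℕ∞) g) :
    ContDiff ℝ (⊤ : ℕ∞) (fun x => (starRingEnd ℂ) (g x)) :=
  ((Complex.conjCLE : ℂ ≃L[ℝ] ℂ) : ℂ →L[ℝ] ℂ).contDiff.comp hg

section iter

variable {N : ℕ} {v : (Fin (N + 1) → ℝ) → ℂ}

lemma iter_periodic (hv : ContDiff ℝ (⊤ : ℕ∞) v) (hOP : OddPeriodic v) (j : Fin (N + 1)) :
    ∀ k x, (pd j)^[k] v (x + Pi.single j (2 * Real.pi)) = (pd j)^[k] v x := by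
  intro k
  induction k with
  | zero => exact fun x => hOP.1 x j
  | succ k ih =>
    intro x
    rw [Function.iterate_succ_apply']
    exact pd_periodic (contDiff_pd_iter hv j k) j _ ih x

lemma iter_sign (hv : ContDiff ℝ (⊤ : ℕ∞) v) (hOP : OddPeriodic v) (j : Fin (N + 1)) :
    ∀ k x, (pd j)^[k] v (Function.update x j (-(x j)))
      = (-1 : ℂ) ^ (k + 1) * (pd j)^[k] v x := by
  intro k
  induction k with
  | zero => intro x; simpa using hOP.2 x j
  | succ k ih =>
    intro x
    rw [Function.iterate_succ_apply']
    rw [pd_reflect (contDiff_pd_iter hv j k) j ((-1 : ℂ) ^ (k + 1)) ih x]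
    ring

lemma iter_vanish (hv : ContDiff ℝ (⊤ : ℕ∞) v) (hOP : OddPeriodic v) (j : Fin (N + 1))
    {k : ℕ} (hk : Even k) :
    ∀ x, (x j = 0 ∨ x j = Real.pi) → (pd j)^[k] v x = 0 := by
  apply vanish_of_odd_periodic j (iter_periodic hv hOP j k)
  intro x
  rw [iter_sign hv hOP j k x, Odd.neg_one_pow hk.add_one]
  ring

lemma step_ineq (hv : ContDiff ℝ (⊤ : ℕ∞) v) (hOP : OddPeriodic v) (j : Fin (N + 1)) (k : ℕ) :
    l2sq (N + 1) ((pd j)^[k + 1] v) ≤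
      Real.sqrt (l2sq (N + 1) ((pd j)^[k] v)) *
        Real.sqrt (l2sq (N + 1) ((pd j)^[k + 2] v)) := by
  set g : ℕ → (Fin (N + 1) → ℝ) → ℂ := fun i => (pd j)^[i] v with hg
  have hsm : ∀ i, ContDiff ℝ (⊤ : ℕ∞) (g i) := fun i => contDiff_pd_iter hv j i
  have hsucc : ∀ i, pd j (g i) = g (i + 1) := by
    intro i
    rw [hg]
    simp only
    rw [Function.iterate_succ_apply']
  set H : (Fin (N + 1) → ℝ) → ℂ := fun x => g k x * (starRingEnd ℂ) (g (k + 1) x) with hH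
  have hHsm : ContDiff ℝ (⊤ : ℕ∞) H := (hsm k).mul (contDiff_conj (hsm (k + 1)))
  have hHb : ∀ x, (x j = 0 ∨ x j = Real.pi) → H x = 0 := by
    intro x hx
    rcases Nat.even_or_odd k with he | ho
    · have hzero : g k x = 0 := by rw [hg]; exact iter_vanish hv hOP j he x hx
      show g k x * (starRingEnd ℂ) (g (k + 1) x) = 0
      rw [hzero, zero_mul]
    · have hzero : g (k + 1) x = 0 := by rw [hg]; exact iter_vanish hv hOP j ho.add_one x hx
      show g k x * (starRingEnd ℂ) (g (k + 1) x) = 0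
      rw [hzero, map_zero, mul_zero]
  have hpdH : ∀ x, pd j H x = g (k + 1) x * (starRingEnd ℂ) (g (k + 1) x)
      + g k x * (starRingEnd ℂ) (g (k + 2) x) := by
    intro x
    have hdk : DifferentiableAt ℝ (g k) x := (hsm k).differentiable (by simp) x
    have hdconj : DifferentiableAt ℝ (fun y => (starRingEnd ℂ) (g (k + 1) y)) x :=
      (contDiff_conj (hsm (k + 1))).differentiable (by simp) x
    rw [hH]
    rw [pd_mul j hdk hdconj]
    rw [pd_conj j ((hsm (k + 1)).differentiable (by simp) x)]
    rw [hsucc k, hsucc (k + 1)]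
  have hibp := ibp_zero j H hHsm hHb
  have hInt1 : IntegrableOn (fun x => g (k + 1) x * (starRingEnd ℂ) (g (k + 1) x))
      (cubeK (N + 1)) :=
    integrableOn_cubeK ((hsm (k + 1)).continuous.mul (contDiff_conj (hsm (k + 1))).continuous)
  have hInt2 : IntegrableOn (fun x => g k x * (starRingEnd ℂ) (g (k + 2) x))
      (cubeK (N + 1)) :=
    integrableOn_cubeK ((hsm k).continuous.mul (contDiff_conj (hsm (k + 2))).continuous)
  have hsum : (∫ x in cubeK (N + 1), g (k + 1) x * (starRingEnd ℂ) (g (k + 1) x))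
      + ∫ x in cubeK (N + 1), g k x * (starRingEnd ℂ) (g (k + 2) x) = 0 := by
    rw [← integral_add hInt1 hInt2, ← hibp]
    exact setIntegral_congr_fun (measurableSet_cubeK _) fun x _ => (hpdH x).symm
  have hreal : (∫ x in cubeK (N + 1), g (k + 1) x * (starRingEnd ℂ) (g (k + 1) x))
      = ((∫ x in cubeK (N + 1), ‖g (k + 1) x‖ ^ 2 : ℝ) : ℂ) := by
    have hcoe : (∫ x in cubeK (N + 1), ((‖g (k + 1) x‖ ^ 2 : ℝ) : ℂ))
        = ((∫ x in cubeK (N + 1), ‖g (k + 1) x‖ ^ 2 : ℝ) : ℂ) := integral_ofReal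
    rw [← hcoe]
    apply setIntegral_congr_fun (measurableSet_cubeK _)
    intro x _
    show g (k + 1) x * (starRingEnd ℂ) (g (k + 1) x) = ((‖g (k + 1) x‖ ^ 2 : ℝ) : ℂ)
    rw [Complex.mul_conj, Complex.normSq_eq_norm_sq]
  have hnn1 : 0 ≤ ∫ x in cubeK (N + 1), ‖g (k + 1) x‖ ^ 2 :=
    setIntegral_nonneg (measurableSet_cubeK _) fun x _ => sq_nonneg _
  have hkey : (∫ x in cubeK (N + 1), ‖g (k + 1) x‖ ^ 2) ≤
      Real.sqrt (∫ x in cubeK (N + 1), ‖g k x‖ ^ 2) *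
        Real.sqrt (∫ x in cubeK (N + 1), ‖g (k + 2) x‖ ^ 2) := by
    have hneg : (∫ x in cubeK (N + 1), g k x * (starRingEnd ℂ) (g (k + 2) x))
        = -(∫ x in cubeK (N + 1), g (k + 1) x * (starRingEnd ℂ) (g (k + 1) x)) :=
      eq_neg_of_add_eq_zero_right (by linear_combination hsum)
    have h1 : (∫ x in cubeK (N + 1), ‖g (k + 1) x‖ ^ 2)
        = ‖∫ x in cubeK (N + 1), g k x * (starRingEnd ℂ) (g (k + 2) x)‖ := by
      rw [hneg, norm_neg, hreal, Complex.norm_real, Real.norm_eq_abs, abs_of_nonneg hnn1]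
    rw [h1]
    exact cauchy_schwarz_K (hsm k).continuous (hsm (k + 2)).continuous
  have hpinv : (0 : ℝ) ≤ (Real.pi ^ (N + 1))⁻¹ := by positivity
  show l2sq (N + 1) (g (k + 1)) ≤
      Real.sqrt (l2sq (N + 1) (g k)) * Real.sqrt (l2sq (N + 1) (g (k + 2)))
  simp only [l2sq]
  rw [Real.sqrt_mul hpinv, Real.sqrt_mul hpinv]
  calc (Real.pi ^ (N + 1))⁻¹ * ∫ x in cubeK (N + 1), ‖g (k + 1) x‖ ^ 2
      ≤ (Real.pi ^ (N + 1))⁻¹ * (Real.sqrt (∫ x in cubeK (N + 1), ‖g k x‖ ^ 2) *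
          Real.sqrt (∫ x in cubeK (N + 1), ‖g (k + 2) x‖ ^ 2)) :=
        mul_le_mul_of_nonneg_left hkey hpinv
    _ = (Real.sqrt (Real.pi ^ (N + 1))⁻¹ * Real.sqrt (∫ x in cubeK (N + 1), ‖g k x‖ ^ 2)) *
        (Real.sqrt (Real.pi ^ (N + 1))⁻¹ *
          Real.sqrt (∫ x in cubeK (N + 1), ‖g (k + 2) x‖ ^ 2)) := by
        rw [show Real.sqrt (Real.pi ^ (N + 1))⁻¹ * Real.sqrt (∫ x in cubeK (N + 1), ‖g k x‖ ^ 2) *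
            (Real.sqrt (Real.pi ^ (N + 1))⁻¹ *
              Real.sqrt (∫ x in cubeK (N + 1), ‖g (k + 2) x‖ ^ 2))
            = (Real.sqrt (Real.pi ^ (N + 1))⁻¹ * Real.sqrt (Real.pi ^ (N + 1))⁻¹) *
              (Real.sqrt (∫ x in cubeK (N + 1), ‖g k x‖ ^ 2) *
                Real.sqrt (∫ x in cubeK (N + 1), ‖g (k + 2) x‖ ^ 2)) from by ring]
        rw [Real.mul_self_sqrt hpinv]

lemma interp {m : ℕ} (hm : 1 ≤ m) (hv : ContDiff ℝ (⊤ : ℕ∞) v)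
    (hOP : OddPeriodic v) (j : Fin (N + 1)) :
    Real.sqrt (l2sq (N + 1) (pd j v)) ≤
      supNormK (N + 1) v ^ (1 - 1 / (m : ℝ)) * Snorm (N + 1) m v ^ (1 / (m : ℝ)) := by
  set a : ℕ → ℝ := fun k => Real.sqrt (l2sq (N + 1) ((pd j)^[k] v)) with ha
  have h0 : ∀ k, 0 ≤ a k := fun k => Real.sqrt_nonneg _
  have hsq : ∀ k, a (k + 1) ^ 2 ≤ a k * a (k + 2) := by
    intro k
    rw [ha]
    simp only
    rw [Real.sq_sqrt (l2sq_nonneg _)]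
    exact step_ineq hv hOP j k
  have hA : 0 ≤ supNormK (N + 1) v := supNormK_nonneg hv.continuous
  have ha0 : a 0 ≤ supNormK (N + 1) v := by
    have h1 : l2sq (N + 1) ((pd j)^[0] v) ≤ supNormK (N + 1) v ^ 2 := by
      rw [Function.iterate_zero_apply]
      exact l2sq_le_sup_sq hv.continuous hA fun x hx => norm_le_supNormK hv.continuous hx
    calc a 0 ≤ Real.sqrt (supNormK (N + 1) v ^ 2) := Real.sqrt_le_sqrt h1
      _ = supNormK (N + 1) v := Real.sqrt_sq hA
  have ham : a m ≤ Snorm (N + 1) m v := by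
    rw [Snorm]
    apply Real.sqrt_le_sqrt
    show l2sq (N + 1) ((pd j)^[m] v) ≤ _
    rw [← mderiv_single v j m]
    exact Finset.single_le_sum (f := fun β => l2sq (N + 1) (mderiv β v))
      (fun β _ => l2sq_nonneg _) (single_mem_antidiagonalTuple j m)
  obtain ⟨m', rfl⟩ : ∃ m', m = m' + 1 := ⟨m - 1, (Nat.succ_pred_eq_of_pos hm).symm⟩
  have hchain := chain_pow h0 hsq m'
  have hfinal : a 1 ^ (m' + 1) ≤
      supNormK (N + 1) v ^ (m' + 1 - 1) * Snorm (N + 1) (m' + 1) v := by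
    have hmul := mul_le_mul (pow_le_pow_left₀ (h0 0) ha0 m') ham (h0 (m' + 1))
      (pow_nonneg hA m')
    have := hchain.trans hmul
    simpa using this
  have hres := le_rpow_of_pow_le (Nat.le_add_left 1 m') (h0 1) hA (Real.sqrt_nonneg _) hfinal
  have ha1 : a 1 = Real.sqrt (l2sq (N + 1) (pd j v)) := by
    simp [ha]
  rw [← ha1]
  exact hres

end iter

end Stmt10Aux

/-- for every `m ≥ 1` there exists `C = C(n,m) > 0` such that for every
smooth odd periodic `v : ℝⁿ → ℂ` and every `d ∈ (ℕ₊)ⁿ`,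
`‖v φ_d‖_{H¹} ≤ C (|v|_∞ |d| + |v|_∞^{1-1/m} S_m(v)^{1/m})`. -/
theorem stmt10 (n : ℕ) (hn : 1 ≤ n) (m : ℕ) (hm : 1 ≤ m) :
    ∃ C : ℝ, 0 < C ∧
      ∀ v : (Fin n → ℝ) → ℂ, ContDiff ℝ (⊤ : ℕ∞) v → OddPeriodic v →
        ∀ d : Fin n → ℕ, (∀ j, 0 < d j) →
          H1norm n (fun x => v x * ((phiBasis d x : ℝ) : ℂ)) ≤
            C * (supNormK n v * Real.sqrt (∑ j : Fin n, ((d j : ℝ)) ^ 2) +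
              supNormK n v ^ (1 - 1 / (m : ℝ)) * Snorm n m v ^ (1 / (m : ℝ))) := by
  classical
  open Stmt10Aux in
  obtain ⟨N, rfl⟩ : ∃ N, n = N + 1 := ⟨n - 1, (Nat.succ_pred_eq_of_pos hn).symm⟩
  set N' : ℕ := (Finset.Nat.antidiagonalTuple (N + 1) 1).card with hN'
  refine ⟨2 * (N' : ℝ) + 1, by positivity, ?_⟩
  intro v hv hOP d hd
  set A := supNormK (N + 1) v with hA
  set B := Snorm (N + 1) m v with hB
  set D := Real.sqrt (∑ j : Fin (N + 1), ((d j : ℝ)) ^ 2) with hD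
  set Q := A ^ (1 - 1 / (m : ℝ)) * B ^ (1 / (m : ℝ)) with hQ
  set w : (Fin (N + 1) → ℝ) → ℂ := fun x => v x * ((phiBasis d x : ℝ) : ℂ) with hw
  have hwsm : ContDiff ℝ (⊤ : ℕ∞) w := hv.mul (contDiff_phiC d)
  have hvc := hv.continuous
  have hA0 : 0 ≤ A := supNormK_nonneg hvc
  have hB0 : 0 ≤ B := Real.sqrt_nonneg _
  have hQ0 : 0 ≤ Q := mul_nonneg (Real.rpow_nonneg hA0 _) (Real.rpow_nonneg hB0 _)
  have hD0 : 0 ≤ D := Real.sqrt_nonneg _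
  have hsum_nonneg : (0 : ℝ) ≤ ∑ j : Fin (N + 1), ((d j : ℝ)) ^ 2 := by positivity
  have hD2 : D ^ 2 = ∑ j : Fin (N + 1), ((d j : ℝ)) ^ 2 := Real.sq_sqrt hsum_nonneg
  have hD1 : 1 ≤ D := by
    have hj0 : (1 : ℝ) ≤ ((d 0 : ℝ)) ^ 2 := by
      have h1 : (1 : ℝ) ≤ (d 0 : ℝ) := by exact_mod_cast hd 0
      nlinarith
    have h1 : (1 : ℝ) ≤ ∑ j : Fin (N + 1), ((d j : ℝ)) ^ 2 :=
      hj0.trans (Finset.single_le_sum (fun i _ => sq_nonneg ((d i : ℝ))) (Finset.mem_univ 0))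
    calc (1 : ℝ) = Real.sqrt 1 := Real.sqrt_one.symm
      _ ≤ D := Real.sqrt_le_sqrt h1
  have hwl2 : l2sq (N + 1) w ≤ A ^ 2 := by
    apply l2sq_le_sup_sq hwsm.continuous hA0
    intro x hx
    show ‖v x * ((phiBasis d x : ℝ) : ℂ)‖ ≤ A
    rw [norm_mul]
    calc ‖v x‖ * ‖((phiBasis d x : ℝ) : ℂ)‖ ≤ A * 1 :=
          mul_le_mul (norm_le_supNormK hvc hx) (norm_phiC_le_one d x) (norm_nonneg _) hA0
      _ = A := mul_one A
  have hterm : ∀ β ∈ Finset.Nat.antidiagonalTuple (N + 1) 1,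
      l2sq (N + 1) (mderiv β w) ≤ 2 * Q ^ 2 + 2 * (A ^ 2 * D ^ 2) := by
    intro β hβ
    obtain ⟨j, rfl⟩ := eq_single_of_antidiagonalTuple_one hβ
    rw [mderiv_single w j 1, Function.iterate_one]
    have hphi_sm := contDiff_phiC (n := N + 1) d
    have hsplit : pd j w = fun x => (pd j v x * phiC d x) + (v x * pd j (phiC d) x) := by
      funext x
      exact pd_mul j (hv.differentiable (by simp) x) (hphi_sm.differentiable (by simp) x)
    rw [hsplit]
    have hFcont : Continuous fun x => pd j v x * phiC d x :=
      (contDiff_pd hv j).continuous.mul hphi_sm.continuous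
    have hGcont : Continuous fun x => v x * pd j (phiC d) x :=
      hvc.mul (contDiff_pd hphi_sm j).continuous
    have h1 := l2sq_add_le hFcont hGcont
    have hF : l2sq (N + 1) (fun x => pd j v x * phiC d x) ≤ Q ^ 2 := by
      have h2 : l2sq (N + 1) (fun x => pd j v x * phiC d x) ≤ l2sq (N + 1) (pd j v) := by
        apply l2sq_mono hFcont (contDiff_pd hv j).continuous
        intro x hx
        rw [norm_mul]
        calc ‖pd j v x‖ * ‖phiC d x‖ ≤ ‖pd j v x‖ * 1 :=
              mul_le_mul_of_nonneg_left (norm_phiC_le_one d x) (norm_nonneg _)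
          _ = ‖pd j v x‖ := mul_one _
      have h3 : Real.sqrt (l2sq (N + 1) (pd j v)) ≤ Q := interp hm hv hOP j
      have h4 : l2sq (N + 1) (pd j v) ≤ Q ^ 2 := by
        have h5 := Real.sq_sqrt (l2sq_nonneg (n := N + 1) (pd j v))
        nlinarith [Real.sqrt_nonneg (l2sq (N + 1) (pd j v))]
      linarith
    have hG : l2sq (N + 1) (fun x => v x * pd j (phiC d) x) ≤ A ^ 2 * D ^ 2 := by
      have h5 : l2sq (N + 1) (fun x => v x * pd j (phiC d) x) ≤ (A * (d j : ℝ)) ^ 2 := by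
        apply l2sq_le_sup_sq hGcont (mul_nonneg hA0 (Nat.cast_nonneg _))
        intro x hx
        rw [norm_mul]
        exact mul_le_mul (norm_le_supNormK hvc hx) (norm_pd_phiC_le d j x) (norm_nonneg _) hA0
      have h6 : ((d j : ℝ)) ^ 2 ≤ D ^ 2 := by
        rw [hD2]
        exact Finset.single_le_sum (fun i _ => sq_nonneg ((d i : ℝ))) (Finset.mem_univ j)
      nlinarith [h5, h6, sq_nonneg A]
    linarith
  have hsumle : ∑ β ∈ Finset.Nat.antidiagonalTuple (N + 1) 1, l2sq (N + 1) (mderiv β w)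
      ≤ (N' : ℝ) * (2 * Q ^ 2 + 2 * (A ^ 2 * D ^ 2)) := by
    calc ∑ β ∈ Finset.Nat.antidiagonalTuple (N + 1) 1, l2sq (N + 1) (mderiv β w)
        ≤ ∑ _β ∈ Finset.Nat.antidiagonalTuple (N + 1) 1, (2 * Q ^ 2 + 2 * (A ^ 2 * D ^ 2)) :=
          Finset.sum_le_sum hterm
      _ = (N' : ℝ) * (2 * Q ^ 2 + 2 * (A ^ 2 * D ^ 2)) := by
          rw [Finset.sum_const, hN', nsmul_eq_mul]
  show H1norm (N + 1) w ≤ (2 * (N' : ℝ) + 1) * (A * D + Q)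
  rw [H1norm]
  have hN'0 : (0 : ℝ) ≤ (N' : ℝ) := Nat.cast_nonneg _
  have hinside : l2sq (N + 1) w +
      ∑ β ∈ Finset.Nat.antidiagonalTuple (N + 1) 1, l2sq (N + 1) (mderiv β w) ≤
      (2 * (N' : ℝ) + 1) * (A * D + Q) ^ 2 := by
    have hD21 : (1 : ℝ) ≤ D ^ 2 := by nlinarith [hD1, hD0]
    have hAD : A ^ 2 ≤ A ^ 2 * D ^ 2 := by nlinarith [sq_nonneg A, hD21]
    have hX : l2sq (N + 1) w ≤ A ^ 2 * D ^ 2 := hwl2.trans hAD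
    have hZ : 0 ≤ A * D * Q := mul_nonneg (mul_nonneg hA0 hD0) hQ0
    have htot := add_le_add hX hsumle
    refine htot.trans ?_
    nlinarith [hZ, sq_nonneg Q, mul_nonneg hN'0 hZ, mul_nonneg hN'0 (sq_nonneg Q)]
  have h2N : (0 : ℝ) ≤ 2 * (N' : ℝ) + 1 := by linarith
  have hADQ : (0 : ℝ) ≤ A * D + Q := add_nonneg (mul_nonneg hA0 hD0) hQ0
  calc Real.sqrt (l2sq (N + 1) w +
        ∑ β ∈ Finset.Nat.antidiagonalTuple (N + 1) 1, l2sq (N + 1) (mderiv β w))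
      ≤ Real.sqrt ((2 * (N' : ℝ) + 1) * (A * D + Q) ^ 2) := Real.sqrt_le_sqrt hinside
    _ = Real.sqrt (2 * (N' : ℝ) + 1) * (A * D + Q) := by
        rw [Real.sqrt_mul h2N, Real.sqrt_sq hADQ]
    _ ≤ (2 * (N' : ℝ) + 1) * (A * D + Q) := by
        apply mul_le_mul_of_nonneg_right _ hADQ
        have h1N : (1 : ℝ) ≤ 2 * (N' : ℝ) + 1 := by linarith
        calc Real.sqrt (2 * (N' : ℝ) + 1) ≤ Real.sqrt ((2 * (N' : ℝ) + 1) ^ 2) :=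
              Real.sqrt_le_sqrt (le_self_pow₀ h1N two_ne_zero)
          _ = 2 * (N' : ℝ) + 1 := Real.sqrt_sq h2N
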